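/- Let V, Q₁, Q₂ be real normed spaces and b¹ : V × Q₁ → ℝ, b² : V × Q₂ → ℝ bounded bilinear forms. Let Ker(b²) = {v ∈ V : b²(v, q₂) = 0 for all q₂ ∈ Q₂}. Suppose: (i) there is c₁ > 0 with c₁‖q₁‖ ≤ sup_{0 ≠ v ∈ Ker(b²)} b¹(v, q₁)/‖v‖ for all q₁ ∈ Q₁; (ii) there is c₂ > 0 with c₂‖q₂‖ ≤ sup_{0 ≠ v ∈ V} b²(v, q₂)/‖v‖ for all q₂ ∈ Q₂; and (iii) |b¹(v, q₁)| ≤ C‖v‖‖q₁‖ for all v, q₁. Then there exists c > 0 such that for all (q₁, q₂) ∈ Q₁ × Q₂, c(‖q₁‖² + ‖q₂‖²)^{1/2} ≤ sup_{0 ≠ v ∈ V} (b¹(v,q₁) + b²(v,q₂))/‖v‖. -/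

import Mathlib

/-!
For a real functional `f`, the supremum of `f v / ‖v‖` over `v ≠ 0` is `‖f‖`, so the right-hand
side is the dual norm `N` of `b₁(·, q₁) + b₂(·, q₂)`. On the kernel of `b₂` this functional
agrees with `b₁(·, q₁)`, giving `c₁ ‖q₁‖ ≤ N`; the triangle inequality gives
`c₂ ‖q₂‖ ≤ N + ‖b₁‖ ‖q₁‖`. Eliminating `‖q₁‖` bounds `‖q₁‖ + ‖q₂‖`, hence the Euclidean norm.
-/

namespace ContinuousLinearMap

variable {V : Type*} [NormedAddCommGroup V] [NormedSpace ℝ V]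

theorem div_norm_le_opNorm (f : V →L[ℝ] ℝ) (v : V) : f v / ‖v‖ ≤ ‖f‖ :=
  (div_le_div_of_nonneg_right (le_abs_self _) (norm_nonneg v)).trans (f.ratio_le_opNorm v)

theorem iSup_div_norm_le_opNorm (f : V →L[ℝ] ℝ) (p : V → Prop) :
    ⨆ v : {v : V // p v}, f v / ‖(v : V)‖ ≤ ‖f‖ :=
  Real.iSup_le (fun v => f.div_norm_le_opNorm v) (norm_nonneg f)

/-- Since `f (-v) = -f v`, the supremum of the signed ratio already controls `|f v| / ‖v‖`. -/
theorem iSup_ne_zero_div_norm_eq_opNorm (f : V →L[ℝ] ℝ) :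
    ⨆ v : {v : V // v ≠ 0}, f v / ‖(v : V)‖ = ‖f‖ := by
  set ratio : {v : V // v ≠ 0} → ℝ := fun v => f v / ‖(v : V)‖
  have hbdd : BddAbove (Set.range ratio) :=
    ⟨‖f‖, Set.forall_mem_range.2 fun v => f.div_norm_le_opNorm v⟩
  have habs : ∀ v : V, v ≠ 0 → |f v| / ‖v‖ ≤ ⨆ v, ratio v := by
    intro v hv
    rcases abs_choice (f v) with h | h
    · rw [h]; exact le_ciSup hbdd ⟨v, hv⟩
    · rw [h, ← map_neg, ← norm_neg v]; exact le_ciSup hbdd ⟨-v, neg_ne_zero.2 hv⟩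
  have hS : 0 ≤ ⨆ v, ratio v := by
    rcases isEmpty_or_nonempty {v : V // v ≠ 0} with h | ⟨v, hv⟩
    · exact (Real.iSup_of_isEmpty _).ge
    · exact (div_nonneg (abs_nonneg _) (norm_nonneg _)).trans (habs v hv)
  refine le_antisymm (f.iSup_div_norm_le_opNorm _) (f.opNorm_le_bound hS fun v => ?_)
  rcases eq_or_ne v 0 with rfl | hv
  · simp
  · rw [Real.norm_eq_abs, ← div_le_iff₀ (norm_pos_iff.2 hv)]
    exact habs v hv

end ContinuousLinearMap

theorem mul_sqrt_sq_add_sq_le {c₁ c₂ C a b N : ℝ} (hc₁ : 0 < c₁) (hc₂ : 0 < c₂) (hC : 0 ≤ C)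
    (ha : 0 ≤ a) (hb : 0 ≤ b) (h₁ : c₁ * a ≤ N) (h₂ : c₂ * b ≤ N + C * a) :
    c₁ * c₂ / (c₁ + c₂ + C) * Real.sqrt (a ^ 2 + b ^ 2) ≤ N := by
  have hsqrt : Real.sqrt (a ^ 2 + b ^ 2) ≤ a + b :=
    Real.sqrt_le_iff.2 ⟨by positivity, by nlinarith⟩
  have hN : 0 ≤ N := (mul_nonneg hc₁.le ha).trans h₁
  rw [div_mul_eq_mul_div, div_le_iff₀ (by positivity)]
  calc c₁ * c₂ * Real.sqrt (a ^ 2 + b ^ 2) ≤ c₁ * c₂ * (a + b) := by gcongr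
    _ ≤ N * (c₁ + c₂ + C) := by nlinarith [mul_le_mul_of_nonneg_left h₁ hC]

theorem stmt_9_general {V Q₁ Q₂ : Type*} [NormedAddCommGroup V] [NormedSpace ℝ V]
    [NormedAddCommGroup Q₁] [NormedSpace ℝ Q₁]
    [NormedAddCommGroup Q₂] [NormedSpace ℝ Q₂]
    (b₁ : V →L[ℝ] Q₁ →L[ℝ] ℝ) (b₂ : V →L[ℝ] Q₂ →L[ℝ] ℝ)
    (c₁ c₂ : ℝ) (hc₁ : 0 < c₁) (hc₂ : 0 < c₂)
    (hinf₁ : ∀ q₁ : Q₁, c₁ * ‖q₁‖ ≤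
      ⨆ v : {v : V // (∀ q₂ : Q₂, b₂ v q₂ = 0) ∧ v ≠ 0}, b₁ v q₁ / ‖(v : V)‖)
    (hinf₂ : ∀ q₂ : Q₂, c₂ * ‖q₂‖ ≤ ⨆ v : {v : V // v ≠ 0}, b₂ v q₂ / ‖(v : V)‖) :
    ∃ c > 0, ∀ (q₁ : Q₁) (q₂ : Q₂),
      c * Real.sqrt (‖q₁‖ ^ 2 + ‖q₂‖ ^ 2) ≤
        ⨆ v : {v : V // v ≠ 0}, (b₁ v q₁ + b₂ v q₂) / ‖(v : V)‖ := by
  refine ⟨c₁ * c₂ / (c₁ + c₂ + ‖b₁‖), by positivity, fun q₁ q₂ => ?_⟩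
  set f := b₁.flip q₁ + b₂.flip q₂
  have h₁ : c₁ * ‖q₁‖ ≤ ‖f‖ := (hinf₁ q₁).trans <|
    Real.iSup_le (fun ⟨v, hker, _⟩ => by simpa [f, hker q₂] using f.div_norm_le_opNorm v)
      (norm_nonneg f)
  have h₂ : c₂ * ‖q₂‖ ≤ ‖f‖ + ‖b₁‖ * ‖q₁‖ :=
    calc c₂ * ‖q₂‖ ≤ ‖b₂.flip q₂‖ :=
          (hinf₂ q₂).trans_eq (b₂.flip q₂).iSup_ne_zero_div_norm_eq_opNorm
      _ = ‖f - b₁.flip q₁‖ := by rw [add_sub_cancel_left]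
      _ ≤ ‖f‖ + ‖b₁.flip q₁‖ := norm_sub_le _ _
      _ ≤ ‖f‖ + ‖b₁‖ * ‖q₁‖ := by grw [b₁.flip.le_opNorm q₁, b₁.opNorm_flip]
  exact (mul_sqrt_sq_add_sq_le hc₁ hc₂ (norm_nonneg b₁) (norm_nonneg q₁) (norm_nonneg q₂) h₁
    h₂).trans_eq f.iSup_ne_zero_div_norm_eq_opNorm.symm

theorem stmt_9 {V Q₁ Q₂ : Type*} [NormedAddCommGroup V] [NormedSpace ℝ V]
    [NormedAddCommGroup Q₁] [NormedSpace ℝ Q₁]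
    [NormedAddCommGroup Q₂] [NormedSpace ℝ Q₂]
    (b₁ : V →L[ℝ] Q₁ →L[ℝ] ℝ) (b₂ : V →L[ℝ] Q₂ →L[ℝ] ℝ)
    (c₁ c₂ C : ℝ) (hc₁ : 0 < c₁) (hc₂ : 0 < c₂) (hC : 0 ≤ C)
    (hinf₁ : ∀ q₁ : Q₁, c₁ * ‖q₁‖ ≤
      ⨆ v : {v : V // (∀ q₂ : Q₂, b₂ v q₂ = 0) ∧ v ≠ 0}, b₁ v q₁ / ‖(v : V)‖)
    (hinf₂ : ∀ q₂ : Q₂, c₂ * ‖q₂‖ ≤ ⨆ v : {v : V // v ≠ 0}, b₂ v q₂ / ‖(v : V)‖)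
    (hbound : ∀ (v : V) (q₁ : Q₁), |b₁ v q₁| ≤ C * ‖v‖ * ‖q₁‖) :
    ∃ c > 0, ∀ (q₁ : Q₁) (q₂ : Q₂),
      c * Real.sqrt (‖q₁‖ ^ 2 + ‖q₂‖ ^ 2) ≤
        ⨆ v : {v : V // v ≠ 0}, (b₁ v q₁ + b₂ v q₂) / ‖(v : V)‖ :=
  stmt_9_general b₁ b₂ c₁ c₂ hc₁ hc₂ hinf₁ hinf₂
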